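/- arXiv:2105.15003 — 6 statements merged into one kernel-verified Lean document; each statement's English description precedes it below -/
import Mathlib

section
/- Let η:ℝ→ℝ be convex, let η' denote a monotone (nondecreasing) representative of its derivative, let ρ,ξ∈ℝ and let g∈ℝ satisfy sgn(ξ)·g=|g|≤1. Then the sub-differential inequality η'(ξ)·g ≥ η'(ξ)·χ(ρ,ξ) + η'(ρ)·(g − χ(ρ,ξ)) holds, where χ(ρ,ξ)=1 if 0<ξ<ρ, −1 if ρ<ξ<0, and 0 otherwise. -/
open MeasureTheory

/-- The kinetic equilibrium (Maxwellian) function. -/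
noncomputable def chi (ρ ξ : ℝ) : ℝ :=
  if 0 < ξ ∧ ξ < ρ then 1 else if ρ < ξ ∧ ξ < 0 then -1 else 0

theorem subdifferential_inequality (η η' : ℝ → ℝ)
    (hconv : ConvexOn ℝ Set.univ η) (hmono : Monotone η')
    (hderiv : ∀ᵐ ξ ∂(volume : Measure ℝ), HasDerivAt η (η' ξ) ξ)
    (ρ ξ g : ℝ) (hg : Real.sign ξ * g = |g|) (hg1 : |g| ≤ 1) :
    η' ξ * g ≥ η' ξ * chi ρ ξ + η' ρ * (g - chi ρ ξ) := by
  have key : (η' ξ - η' ρ) * (g - chi ρ ξ) ≥ 0 := by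
    unfold chi
    split_ifs with h1 h2
    · have hle : η' ξ ≤ η' ρ := hmono h1.2.le
      have : g ≤ 1 := (le_abs_self g).trans hg1
      nlinarith
    · have hle : η' ρ ≤ η' ξ := hmono h2.1.le
      have : -1 ≤ g := by
        have := (neg_abs_le g); linarith [neg_le_neg hg1]
      nlinarith
    · rcases lt_trichotomy ξ 0 with hneg | hzero | hpos
      · have hρξ : ξ ≤ ρ := by
          by_contra hc; exact h2 ⟨lt_of_not_ge hc, hneg⟩
        have hle : η' ξ ≤ η' ρ := hmono hρξ
        have hgle : g ≤ 0 := by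
          rw [Real.sign_of_neg hneg] at hg
          nlinarith [abs_nonneg g]
        nlinarith
      · have : g = 0 := by
          rw [hzero, Real.sign_zero, zero_mul] at hg
          exact abs_eq_zero.mp hg.symm
        simp [this]
      · have hρξ : ρ ≤ ξ := by
          by_contra hc; exact h1 ⟨hpos, lt_of_not_ge hc⟩
        have hle : η' ρ ≤ η' ξ := hmono hρξ
        have hgge : 0 ≤ g := by
          rw [Real.sign_of_pos hpos, one_mul] at hg
          rw [hg]; exact abs_nonneg g
        nlinarith
  nlinarith [key]
end

section
/- Let η:ℝ→ℝ be convex with a.e. derivative η', and let ρ∈ℝ. Among all measurable functions g:ℝ→ℝ with g(ξ)∈D_ξ for a.e. ξ (i.e. sgn(ξ)g(ξ)=|g(ξ)|≤1), g∈L¹(ℝ), and ∫_ℝ g(ξ)dξ = ρ, the function g(ξ)=χ(ρ,ξ) minimizes the functional g ↦ ∫_ℝ η'(ξ)·g(ξ)dξ, and the minimal value equals η(ρ)−η(0). If moreover η is strictly convex, then χ(ρ,·) is the unique minimizer (up to a.e. equality). -/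
open MeasureTheory

/-!
For a monotone `φ` and an admissible `g` (values in `D_ξ`, total mass `ρ`),
`(φ ξ - φ ρ) * (g ξ - χ(ρ, ξ)) ≥ 0` pointwise, because `χ(ρ, ξ)` is the top of `D_ξ` for `ξ < ρ`
and its bottom for `ξ > ρ`. Integrating and using `∫ g = ∫ χ(ρ, ·) = ρ` gives
`∫ φ χ(ρ, ·) ≤ ∫ φ g`, and `∫ φ χ(ρ, ·) = ∫₀^ρ φ`. Apply this to `φ` the right derivative of `η`:
it is monotone, equals `η'` almost everywhere, integrates to `η ρ - η 0`, and is strictly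
increasing when `η` is strictly convex, so that equality forces `g = χ(ρ, ·)` off `{ρ}`.
-/

open Set Filter

theorem ConvexOn.integral_rightDeriv {S : Set ℝ} {f : ℝ → ℝ} (hf : ConvexOn ℝ S f) {a b : ℝ}
    (hab : uIcc a b ⊆ interior S) :
    ∫ x in a..b, derivWithin f (Ioi x) x = f b - f a :=
  intervalIntegral.integral_eq_sub_of_hasDeriv_right (hf.continuousOn_interior.mono hab)
    (fun _ hx => hf.hasDerivWithinAt_rightDeriv_of_mem_interior (hab (Ioo_subset_Icc_self hx)))
    (hf.monotoneOn_rightDeriv.mono hab).intervalIntegrable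

theorem StrictConvexOn.strictMonoOn_rightDeriv {S : Set ℝ} {f : ℝ → ℝ} (hf : StrictConvexOn ℝ S f) :
    StrictMonoOn (fun x => derivWithin f (Ioi x) x) (interior S) := fun x hx y hy hxy =>
  calc derivWithin f (Ioi x) x < slope f x y :=
        hf.rightDeriv_lt_slope (interior_subset hx) (interior_subset hy) hxy
          (hf.convexOn.differentiableWithinAt_Ioi_of_mem_interior hx)
    _ ≤ derivWithin f (Iio y) y :=
        hf.convexOn.slope_le_leftDeriv_of_mem_interior (interior_subset hx) hy hxy
    _ ≤ derivWithin f (Ioi y) y := hf.convexOn.leftDeriv_le_rightDeriv_of_mem_interior hy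

/-- The set `D_ξ`. -/
def kineticDomain (ξ : ℝ) : Set ℝ := {y | Real.sign ξ * y = |y| ∧ |y| ≤ 1}

theorem kineticDomain_eq_uIcc (ξ : ℝ) : kineticDomain ξ = uIcc 0 (Real.sign ξ) := by
  ext y
  rcases lt_trichotomy ξ 0 with h | rfl | h
  · simp only [kineticDomain, Real.sign_of_neg h, mem_ofPred_eq, neg_one_mul, eq_comm (a := -y),
      abs_eq_neg_self, uIcc_of_ge (neg_one_lt_zero.le : (-1 : ℝ) ≤ 0), mem_Icc]
    constructor
    · rintro ⟨hy, hy1⟩; exact ⟨by linarith [abs_of_nonpos hy], hy⟩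
    · rintro ⟨hy, hy1⟩; exact ⟨hy1, by rw [abs_of_nonpos hy1]; linarith⟩
  · simp +contextual [kineticDomain, eq_comm (a := (0 : ℝ))]
  · simp only [kineticDomain, Real.sign_of_pos h, mem_ofPred_eq, one_mul, eq_comm (a := y),
      abs_eq_self, uIcc_of_le zero_le_one, mem_Icc]
    constructor
    · rintro ⟨hy, hy1⟩; exact ⟨hy, by rwa [abs_of_nonneg hy] at hy1⟩
    · rintro ⟨hy, hy1⟩; exact ⟨hy, by rwa [abs_of_nonneg hy]⟩

section

variable {ρ ξ y : ℝ}

theorem chi_eq_min_of_lt (h : ρ < ξ) : chi ρ ξ = min 0 (Real.sign ξ) := by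
  rcases lt_trichotomy ξ 0 with hξ | rfl | hξ
  · simp [chi, h, hξ, Real.sign_of_neg hξ, not_lt_of_gt hξ]
  · simp [chi]
  · simp [chi, h.le, hξ, Real.sign_of_pos hξ, not_lt_of_gt hξ]

theorem chi_eq_max_of_gt (h : ξ < ρ) : chi ρ ξ = max 0 (Real.sign ξ) := by
  rcases lt_trichotomy ξ 0 with hξ | rfl | hξ
  · simp [chi, h.le, hξ, Real.sign_of_neg hξ, not_lt_of_gt hξ]
  · simp [chi]
  · simp [chi, h, hξ, Real.sign_of_pos hξ]

theorem chi_mem_kineticDomain (ρ ξ : ℝ) : chi ρ ξ ∈ kineticDomain ξ := by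
  rw [kineticDomain_eq_uIcc]
  rcases lt_trichotomy ξ ρ with h | rfl | h
  · rw [chi_eq_max_of_gt h]; exact right_mem_Icc.2 min_le_max
  · simp [chi]
  · rw [chi_eq_min_of_lt h]; exact left_mem_Icc.2 min_le_max

theorem chi_le_of_mem_kineticDomain (hy : y ∈ kineticDomain ξ) (h : ρ < ξ) : chi ρ ξ ≤ y := by
  rw [kineticDomain_eq_uIcc] at hy
  exact (chi_eq_min_of_lt h).trans_le hy.1

theorem le_chi_of_mem_kineticDomain (hy : y ∈ kineticDomain ξ) (h : ξ < ρ) : y ≤ chi ρ ξ := by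
  rw [kineticDomain_eq_uIcc] at hy
  exact hy.2.trans_eq (chi_eq_max_of_gt h).symm

theorem sub_mul_sub_chi_nonneg {φ : ℝ → ℝ} (hφ : Monotone φ) (hy : y ∈ kineticDomain ξ) :
    0 ≤ (φ ξ - φ ρ) * (y - chi ρ ξ) := by
  rcases lt_trichotomy ξ ρ with h | rfl | h
  · exact mul_nonneg_of_nonpos_of_nonpos (sub_nonpos.2 (hφ h.le))
      (sub_nonpos.2 (le_chi_of_mem_kineticDomain hy h))
  · simp
  · exact mul_nonneg (sub_nonneg.2 (hφ h.le)) (sub_nonneg.2 (chi_le_of_mem_kineticDomain hy h))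

theorem mul_chi_eq_indicator_sub_indicator (φ : ℝ → ℝ) :
    (fun ξ => φ ξ * chi ρ ξ) = fun ξ => (Ioo 0 ρ).indicator φ ξ - (Ioo ρ 0).indicator φ ξ := by
  ext ξ
  by_cases h₁ : 0 < ξ ∧ ξ < ρ
  · have h₂ : ¬(ρ < ξ ∧ ξ < 0) := fun h₂ => (h₁.1.trans h₂.2).false
    simp [chi, indicator, h₁, h₂, mem_Ioo]
  · by_cases h₂ : ρ < ξ ∧ ξ < 0 <;> simp [chi, indicator, h₁, h₂, mem_Ioo]

variable {φ g : ℝ → ℝ}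

theorem integrable_mul_chi (hφ : IntervalIntegrable φ volume 0 ρ) :
    Integrable fun ξ => φ ξ * chi ρ ξ := by
  rw [mul_chi_eq_indicator_sub_indicator]
  exact ((hφ.1.mono_set Ioo_subset_Ioc_self).integrable_indicator measurableSet_Ioo).sub
    ((hφ.2.mono_set Ioo_subset_Ioc_self).integrable_indicator measurableSet_Ioo)

theorem integral_mul_chi (hφ : IntervalIntegrable φ volume 0 ρ) :
    ∫ ξ, φ ξ * chi ρ ξ = ∫ ξ in 0..ρ, φ ξ := by
  rw [mul_chi_eq_indicator_sub_indicator, integral_sub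
    ((hφ.1.mono_set Ioo_subset_Ioc_self).integrable_indicator measurableSet_Ioo)
    ((hφ.2.mono_set Ioo_subset_Ioc_self).integrable_indicator measurableSet_Ioo),
    integral_indicator measurableSet_Ioo, integral_indicator measurableSet_Ioo,
    ← integral_Ioc_eq_integral_Ioo, ← integral_Ioc_eq_integral_Ioo]
  rfl

theorem integrable_chi (ρ : ℝ) : Integrable fun ξ => chi ρ ξ := by
  simpa using integrable_mul_chi (φ := 1) (ρ := ρ) intervalIntegrable_const

theorem integral_chi (ρ : ℝ) : ∫ ξ, chi ρ ξ = ρ := by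
  simpa using integral_mul_chi (φ := 1) (ρ := ρ) intervalIntegrable_const

theorem integral_sub_mul_sub_chi (c : ℝ) (hφ : IntervalIntegrable φ volume 0 ρ)
    (hg : Integrable g) (hgρ : ∫ ξ, g ξ = ρ) (hφg : Integrable fun ξ => φ ξ * g ξ) :
    ∫ ξ, (φ ξ - c) * (g ξ - chi ρ ξ) = (∫ ξ, φ ξ * g ξ) - ∫ ξ, φ ξ * chi ρ ξ := by
  have hexpand : (fun ξ => (φ ξ - c) * (g ξ - chi ρ ξ)) =
      fun ξ => (φ ξ * g ξ - φ ξ * chi ρ ξ) - (c * g ξ - c * chi ρ ξ) := by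
    ext ξ; ring
  have hφχ := integrable_mul_chi hφ
  have hcg : Integrable fun ξ => c * g ξ := hg.const_mul c
  have hcχ : Integrable fun ξ => c * chi ρ ξ := (integrable_chi ρ).const_mul c
  have hφgχ : Integrable fun ξ => φ ξ * g ξ - φ ξ * chi ρ ξ := hφg.sub hφχ
  have hcgχ : Integrable fun ξ => c * g ξ - c * chi ρ ξ := hcg.sub hcχ
  rw [hexpand, integral_sub hφgχ hcgχ, integral_sub hφg hφχ, integral_sub hcg hcχ,
    integral_const_mul, integral_const_mul, hgρ, integral_chi, sub_self, sub_zero]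

theorem integral_mul_chi_le (hφ : Monotone φ) (hg_mem : ∀ᵐ ξ, g ξ ∈ kineticDomain ξ)
    (hg : Integrable g) (hgρ : ∫ ξ, g ξ = ρ) (hφg : Integrable fun ξ => φ ξ * g ξ) :
    ∫ ξ, φ ξ * chi ρ ξ ≤ ∫ ξ, φ ξ * g ξ := by
  have hgap := integral_nonneg_of_ae (hg_mem.mono fun ξ hξ => sub_mul_sub_chi_nonneg (ρ := ρ) hφ hξ)
  rw [integral_sub_mul_sub_chi _ hφ.intervalIntegrable hg hgρ hφg] at hgap
  exact sub_nonneg.1 hgap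

theorem ae_eq_chi_of_integral_mul_eq (hφ : StrictMono φ) (hg_mem : ∀ᵐ ξ, g ξ ∈ kineticDomain ξ)
    (hg : Integrable g) (hgρ : ∫ ξ, g ξ = ρ) (hφg : Integrable fun ξ => φ ξ * g ξ)
    (heq : ∫ ξ, φ ξ * g ξ = ∫ ξ, φ ξ * chi ρ ξ) : g =ᵐ[volume] fun ξ => chi ρ ξ := by
  have hint : Integrable fun ξ => (φ ξ - φ ρ) * (g ξ - chi ρ ξ) := by
    simp only [sub_mul, mul_sub]
    exact (hφg.sub (hg.const_mul _)).sub
      ((integrable_mul_chi hφ.monotone.intervalIntegrable).sub ((integrable_chi ρ).const_mul _))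
  have hzero : (fun ξ => (φ ξ - φ ρ) * (g ξ - chi ρ ξ)) =ᵐ[volume] 0 := by
    refine (integral_eq_zero_iff_of_nonneg_ae
      (hg_mem.mono fun ξ hξ => sub_mul_sub_chi_nonneg hφ.monotone hξ) hint).1 ?_
    rw [integral_sub_mul_sub_chi _ hφ.monotone.intervalIntegrable hg hgρ hφg, heq, sub_self]
  filter_upwards [hzero, Measure.ae_ne volume ρ] with ξ hξ hne
  rcases mul_eq_zero.1 hξ with h | h
  · exact absurd (hφ.injective (sub_eq_zero.1 h)) hne
  · exact sub_eq_zero.1 h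

end

theorem chi_minimizes_kinetic_entropy_general (η η' : ℝ → ℝ)
    (hconv : ConvexOn ℝ Set.univ η)
    (hderiv : ∀ᵐ ξ ∂(volume : Measure ℝ), HasDerivAt η (η' ξ) ξ) (ρ : ℝ) :
    -- χ(ρ,·) satisfies the constraints
    ((∀ ξ : ℝ, Real.sign ξ * chi ρ ξ = |chi ρ ξ| ∧ |chi ρ ξ| ≤ 1) ∧
      Integrable (fun ξ => chi ρ ξ) ∧ (∫ ξ : ℝ, chi ρ ξ) = ρ) ∧
    -- its value is η(ρ) − η(0)
    (∫ ξ : ℝ, η' ξ * chi ρ ξ) = η ρ - η 0 ∧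
    -- it minimizes the functional among all admissible g
    (∀ g : ℝ → ℝ,
      (∀ᵐ ξ ∂(volume : Measure ℝ), Real.sign ξ * g ξ = |g ξ| ∧ |g ξ| ≤ 1) →
      Integrable g → (∫ ξ : ℝ, g ξ) = ρ →
      Integrable (fun ξ => η' ξ * g ξ) →
      η ρ - η 0 ≤ ∫ ξ : ℝ, η' ξ * g ξ) ∧
    -- if η is strictly convex the minimizer is unique up to a.e. equality
    (StrictConvexOn ℝ Set.univ η →
      ∀ g : ℝ → ℝ,
        (∀ᵐ ξ ∂(volume : Measure ℝ), Real.sign ξ * g ξ = |g ξ| ∧ |g ξ| ≤ 1) →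
        Integrable g → (∫ ξ : ℝ, g ξ) = ρ →
        Integrable (fun ξ => η' ξ * g ξ) →
        (∫ ξ : ℝ, η' ξ * g ξ) = η ρ - η 0 →
        g =ᵐ[(volume : Measure ℝ)] fun ξ => chi ρ ξ) := by
  set D : ℝ → ℝ := fun x => derivWithin η (Ioi x) x
  have hD : Monotone D := by
    simpa only [interior_univ, monotoneOn_univ] using hconv.monotoneOn_rightDeriv
  have hη'D : ∀ g : ℝ → ℝ, (fun ξ => η' ξ * g ξ) =ᵐ[volume] fun ξ => D ξ * g ξ := fun g =>
    hderiv.mono fun ξ hξ =>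
      congrArg (· * g ξ) (hξ.hasDerivWithinAt.derivWithin (uniqueDiffWithinAt_Ioi ξ)).symm
  have hval : ∫ ξ, η' ξ * chi ρ ξ = η ρ - η 0 := by
    rw [integral_congr_ae (hη'D _), integral_mul_chi hD.intervalIntegrable,
      hconv.integral_rightDeriv (by simp)]
  refine ⟨⟨chi_mem_kineticDomain ρ, integrable_chi ρ, integral_chi ρ⟩, hval, ?_, ?_⟩
  · intro g hg_mem hg hgρ hη'g
    rw [← hval, integral_congr_ae (hη'D _), integral_congr_ae (hη'D _)]
    exact integral_mul_chi_le hD hg_mem hg hgρ (hη'g.congr (hη'D g))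
  · intro hstrict g hg_mem hg hgρ hη'g heq
    rw [← hval, integral_congr_ae (hη'D _), integral_congr_ae (hη'D _)] at heq
    have hDstrict : StrictMono D := by
      simpa only [interior_univ, strictMonoOn_univ] using hstrict.strictMonoOn_rightDeriv
    exact ae_eq_chi_of_integral_mul_eq hDstrict hg_mem hg hgρ (hη'g.congr (hη'D g)) heq

theorem chi_minimizes_kinetic_entropy (η η' : ℝ → ℝ)
    (hconv : ConvexOn ℝ Set.univ η) (hmono : Monotone η')
    (hderiv : ∀ᵐ ξ ∂(volume : Measure ℝ), HasDerivAt η (η' ξ) ξ) (ρ : ℝ) :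
    -- χ(ρ,·) satisfies the constraints
    ((∀ ξ : ℝ, Real.sign ξ * chi ρ ξ = |chi ρ ξ| ∧ |chi ρ ξ| ≤ 1) ∧
      Integrable (fun ξ => chi ρ ξ) ∧ (∫ ξ : ℝ, chi ρ ξ) = ρ) ∧
    -- its value is η(ρ) − η(0)
    (∫ ξ : ℝ, η' ξ * chi ρ ξ) = η ρ - η 0 ∧
    -- it minimizes the functional among all admissible g
    (∀ g : ℝ → ℝ,
      (∀ᵐ ξ ∂(volume : Measure ℝ), Real.sign ξ * g ξ = |g ξ| ∧ |g ξ| ≤ 1) →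
      Integrable g → (∫ ξ : ℝ, g ξ) = ρ →
      Integrable (fun ξ => η' ξ * g ξ) →
      η ρ - η 0 ≤ ∫ ξ : ℝ, η' ξ * g ξ) ∧
    -- if η is strictly convex the minimizer is unique up to a.e. equality
    (StrictConvexOn ℝ Set.univ η →
      ∀ g : ℝ → ℝ,
        (∀ᵐ ξ ∂(volume : Measure ℝ), Real.sign ξ * g ξ = |g ξ| ∧ |g ξ| ≤ 1) →
        Integrable g → (∫ ξ : ℝ, g ξ) = ρ →
        Integrable (fun ξ => η' ξ * g ξ) →
        (∫ ξ : ℝ, η' ξ * g ξ) = η ρ - η 0 →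
        g =ᵐ[(volume : Measure ℝ)] fun ξ => chi ρ ξ) :=
  chi_minimizes_kinetic_entropy_general η η' hconv hderiv ρ
end

section
/- Let K⊂ℝ be a compact interval, w∈L^∞(K) with w≥0 a.e., η:ℝ→ℝ convex, ρ∈K and M∈ℝ with η'(ρ−)≤M≤η'(ρ+). Then for every g∈L¹(K) with g(ξ)∈D_ξ a.e. and ∫_K w(ξ)g(ξ)dξ = ∫_K w(ξ)χ(ρ,ξ)dξ, one has ∫_K w(ξ)η'(ξ)g(ξ)dξ ≥ ∫_K w(ξ)η'(ξ)χ(ρ,ξ)dξ. In particular, the constrained weighted kinetic entropy minimization problem is solved by the equilibrium χ(ρ,·). -/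
open MeasureTheory

lemma chi_abs_le (ρ ξ : ℝ) : |chi ρ ξ| ≤ 1 := by
  unfold chi
  split_ifs <;> simp

lemma chi_measurable (ρ : ℝ) : Measurable (chi ρ) := by
  unfold chi
  refine Measurable.ite ?_ measurable_const (Measurable.ite ?_ measurable_const measurable_const)
  · have : {ξ : ℝ | 0 < ξ ∧ ξ < ρ} = Set.Ioo 0 ρ := rfl
    rw [this]; exact measurableSet_Ioo
  · have : {ξ : ℝ | ρ < ξ ∧ ξ < 0} = Set.Ioo ρ 0 := rfl
    rw [this]; exact measurableSet_Ioo

/-- The constrained weighted kinetic entropy minimization problem on a compact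
interval `K = [a,b]` with nonnegative bounded weight `w` is solved by the
equilibrium `χ(ρ,·)`, where `M` is a subgradient of the convex entropy `η` at `ρ`. -/
theorem weighted_kinetic_entropy_min (a b : ℝ) (hab : a ≤ b) (w η η' : ℝ → ℝ)
    (hwmeas : Measurable w)
    (hwpos : ∀ᵐ ξ ∂(volume.restrict (Set.Icc a b)), 0 ≤ w ξ)
    (C : ℝ) (hwbd : ∀ᵐ ξ ∂(volume.restrict (Set.Icc a b)), |w ξ| ≤ C)
    (hconv : ConvexOn ℝ Set.univ η) (hmono : Monotone η')
    (hderiv : ∀ᵐ ξ ∂(volume : Measure ℝ), HasDerivAt η (η' ξ) ξ)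
    (ρ M : ℝ) (hρ : ρ ∈ Set.Icc a b)
    (hM : ∀ y : ℝ, η ρ + M * (y - ρ) ≤ η y)
    (g : ℝ → ℝ) (hgmeas : Measurable g)
    (hgint : IntegrableOn g (Set.Icc a b))
    (hgD : ∀ᵐ ξ ∂(volume.restrict (Set.Icc a b)),
      Real.sign ξ * g ξ = |g ξ| ∧ |g ξ| ≤ 1)
    (hcons : (∫ ξ in Set.Icc a b, w ξ * g ξ) = ∫ ξ in Set.Icc a b, w ξ * chi ρ ξ) :
    (∫ ξ in Set.Icc a b, w ξ * η' ξ * chi ρ ξ) ≤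
      ∫ ξ in Set.Icc a b, w ξ * η' ξ * g ξ := by
  set μ := volume.restrict (Set.Icc a b) with hμ
  -- a.e. ξ ≠ ρ
  have hne : ∀ᵐ ξ ∂μ, ξ ≠ ρ := by
    refine ae_restrict_of_ae ?_
    rw [ae_iff]
    simp only [not_not]
    have : {ξ : ℝ | ξ = ρ} = {ρ} := rfl
    rw [this]
    exact measure_singleton ρ
  have hderiv' : ∀ᵐ ξ ∂μ, HasDerivAt η (η' ξ) ξ := ae_restrict_of_ae hderiv
  -- bound for η' on Icc a b
  set B : ℝ := |η' a| + |η' b| with hB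
  have hη'bd : ∀ ξ ∈ Set.Icc a b, |η' ξ| ≤ B := by
    intro ξ hξ
    rcases abs_le.mp (le_refl |η' ξ|) with ⟨_, _⟩
    have h1 : η' a ≤ η' ξ := hmono hξ.1
    have h2 : η' ξ ≤ η' b := hmono hξ.2
    rw [abs_le]
    have ha1 := neg_abs_le (η' a)
    have ha2 := le_abs_self (η' b)
    have ha3 := abs_nonneg (η' a)
    have ha4 := abs_nonneg (η' b)
    constructor <;> simp only [hB] <;> linarith
  have hη'meas : Measurable η' := hmono.measurable
  have hmem : ∀ᵐ ξ ∂μ, ξ ∈ Set.Icc a b := ae_restrict_mem measurableSet_Icc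
  -- the key pointwise inequality
  have hpt : ∀ᵐ ξ ∂μ, 0 ≤ w ξ * ((η' ξ - M) * (g ξ - chi ρ ξ)) := by
    filter_upwards [hwpos, hgD, hderiv', hne] with ξ hw hg hd hne
    refine mul_nonneg hw ?_
    obtain ⟨hsgn, hgle⟩ := hg
    rcases lt_trichotomy ξ ρ with hlt | heq | hgt
    · -- ξ < ρ : η' ξ ≤ M and g ξ ≤ chi ρ ξ
      have hMξ : η' ξ ≤ M := by
        have hs := hconv.le_slope_of_hasDerivAt (Set.mem_univ ξ) (Set.mem_univ ρ) hlt hd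
        rw [slope_def_field] at hs
        have hpos : 0 < ρ - ξ := by linarith
        have hM' := hM ξ
        have : (η ρ - η ξ) / (ρ - ξ) ≤ M := by
          rw [div_le_iff₀ hpos]; nlinarith
        linarith
      have hgc : g ξ ≤ chi ρ ξ := by
        unfold chi
        split_ifs with h1 h2
        · exact le_trans (le_abs_self _) hgle
        · linarith [h2.1]
        · -- chi = 0; here ¬(0 < ξ) since ξ < ρ and ¬(0<ξ ∧ ξ<ρ)
          have hξ0 : ξ ≤ 0 := by
            by_contra hc
            push_neg at hc
            exact h1 ⟨hc, hlt⟩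
          rcases lt_or_eq_of_le hξ0 with hneg | h0
          · have : Real.sign ξ = -1 := Real.sign_of_neg hneg
            rw [this] at hsgn
            nlinarith [abs_nonneg (g ξ)]
          · subst h0
            rw [Real.sign_zero, zero_mul] at hsgn
            have := abs_eq_zero.mp hsgn.symm
            simp [this]
      nlinarith
    · exact absurd heq hne
    · -- ρ < ξ : M ≤ η' ξ and chi ρ ξ ≤ g ξ
      have hMξ : M ≤ η' ξ := by
        have hs := hconv.slope_le_of_hasDerivAt (Set.mem_univ ρ) (Set.mem_univ ξ) hgt hd
        rw [slope_def_field] at hs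
        have hpos : 0 < ξ - ρ := by linarith
        have hM' := hM ξ
        have : M ≤ (η ξ - η ρ) / (ξ - ρ) := by
          rw [le_div_iff₀ hpos]; nlinarith
        linarith
      have hgc : chi ρ ξ ≤ g ξ := by
        unfold chi
        split_ifs with h1 h2
        · linarith [h1.2]
        · linarith [neg_abs_le (g ξ), hgle]
        · have hξ0 : 0 ≤ ξ := by
            by_contra hc
            push_neg at hc
            exact h2 ⟨hgt, hc⟩
          rcases lt_or_eq_of_le hξ0 with hposξ | h0
          · have : Real.sign ξ = 1 := Real.sign_of_pos hposξ
            rw [this, one_mul] at hsgn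
            rw [hsgn]; exact abs_nonneg _
          · subst h0
            rw [Real.sign_zero, zero_mul] at hsgn
            have := abs_eq_zero.mp hsgn.symm
            simp [this]
      exact mul_nonneg (by linarith) (by linarith)
  -- nonnegativity of C and B
  have hB0 : 0 ≤ B := by positivity
  -- integrability lemmas
  have hχint : IntegrableOn (chi ρ) (Set.Icc a b) := by
    refine Integrable.mono' (integrable_const 1) ((chi_measurable ρ).aestronglyMeasurable) ?_
    exact Filter.Eventually.of_forall fun ξ => chi_abs_le ρ ξ
  have key : ∀ (f : ℝ → ℝ), Measurable f → IntegrableOn f (Set.Icc a b) →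
      (∀ᵐ ξ ∂μ, |f ξ| ≤ 1) →
      IntegrableOn (fun ξ => w ξ * η' ξ * f ξ) (Set.Icc a b) ∧
      IntegrableOn (fun ξ => w ξ * f ξ) (Set.Icc a b) := by
    intro f hfmeas hfint hfbd
    constructor
    · refine Integrable.mono' (g := fun _ => C * B)
        (integrable_const _) ((hwmeas.mul hη'meas).mul hfmeas).aestronglyMeasurable ?_
      filter_upwards [hwbd, hfbd, hmem] with ξ hw hf hs
      have hC0 : 0 ≤ C := le_trans (abs_nonneg _) hw
      calc ‖w ξ * η' ξ * f ξ‖ = |w ξ| * |η' ξ| * |f ξ| := by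
            simp [Real.norm_eq_abs, abs_mul]
        _ ≤ C * B * 1 := by
            apply mul_le_mul (mul_le_mul hw (hη'bd ξ hs) (abs_nonneg _) hC0) hf (abs_nonneg _)
            positivity
        _ = C * B := mul_one _
    · refine Integrable.mono' (g := fun _ => C)
        (integrable_const _) (hwmeas.mul hfmeas).aestronglyMeasurable ?_
      filter_upwards [hwbd, hfbd] with ξ hw hf
      have hC0 : 0 ≤ C := le_trans (abs_nonneg _) hw
      calc ‖w ξ * f ξ‖ = |w ξ| * |f ξ| := by simp [Real.norm_eq_abs, abs_mul]
        _ ≤ C * 1 := mul_le_mul hw hf (abs_nonneg _) hC0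
        _ = C := mul_one _
  have hgbd : ∀ᵐ ξ ∂μ, |g ξ| ≤ 1 := by filter_upwards [hgD] with ξ h; exact h.2
  have hχbd : ∀ᵐ ξ ∂μ, |chi ρ ξ| ≤ 1 := Filter.Eventually.of_forall fun ξ => chi_abs_le ρ ξ
  obtain ⟨hI1, hI3⟩ := key g hgmeas hgint hgbd
  obtain ⟨hI2, hI4⟩ := key (chi ρ) (chi_measurable ρ) hχint hχbd
  -- integrate the pointwise inequality
  have h0 : 0 ≤ ∫ ξ in Set.Icc a b, w ξ * ((η' ξ - M) * (g ξ - chi ρ ξ)) :=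
    integral_nonneg_of_ae hpt
  have hexp : (fun ξ => w ξ * ((η' ξ - M) * (g ξ - chi ρ ξ)))
      = fun ξ => (w ξ * η' ξ * g ξ - w ξ * η' ξ * chi ρ ξ)
          - M * (w ξ * g ξ - w ξ * chi ρ ξ) := by
    funext ξ; ring
  rw [hexp] at h0
  have hA : Integrable (fun ξ => w ξ * η' ξ * g ξ - w ξ * η' ξ * chi ρ ξ) μ := hI1.sub hI2
  have hBint : Integrable (fun ξ => w ξ * g ξ - w ξ * chi ρ ξ) μ := hI3.sub hI4
  rw [integral_sub hA (hBint.const_mul M), integral_const_mul,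
      integral_sub hI1 hI2, integral_sub hI3 hI4] at h0
  rw [hcons] at h0
  linarith
end

section
/- Let K=[a,b] be a compact interval, let f:K→[0,∞) be Lipschitz and concave with f(a)=f(b)=0 and f not identically zero, and let η:ℝ→ℝ be convex. Then η'(ξ)·f'(ξ) ≤ 0 for a.e. ξ∈K if and only if there exists ρ*∈K such that ρ* is a minimum point of η on K and a maximum point of f on K. -/
open MeasureTheory Set Filter Topology

lemma aux_deriv_ge_right {g : ℝ → ℝ} {ξ u d s : ℝ} (hu : ξ < u)
    (hd : HasDerivAt g d ξ) (hs : ∀ y ∈ Set.Ioo ξ u, s ≤ (g y - g ξ) / (y - ξ)) : s ≤ d := by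
  have h1 : Tendsto (slope g ξ) (𝓝[>] ξ) (𝓝 d) := by
    have h2 := (hd.hasDerivWithinAt (s := Set.Ioi ξ))
    rw [hasDerivWithinAt_iff_tendsto_slope] at h2
    simpa [Set.diff_singleton_eq_self (show ξ ∉ Set.Ioi ξ by simp)] using h2
  refine ge_of_tendsto h1 ?_
  filter_upwards [Ioo_mem_nhdsGT_of_mem ⟨le_refl ξ, hu⟩] with y hy
  simpa [slope_def_field] using hs y hy

lemma aux_deriv_le_right {g : ℝ → ℝ} {ξ u d s : ℝ} (hu : ξ < u)
    (hd : HasDerivAt g d ξ) (hs : ∀ y ∈ Set.Ioo ξ u, (g y - g ξ) / (y - ξ) ≤ s) : d ≤ s := by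
  have := aux_deriv_ge_right (g := fun x => -g x) (d := -d) (s := -s) hu hd.neg
    (fun y hy => by
      have := hs y hy
      have e : (-g y - -g ξ) / (y - ξ) = -((g y - g ξ) / (y - ξ)) := by ring
      rw [e]; linarith)
  linarith

lemma aux_deriv_ge_left {g : ℝ → ℝ} {ξ l d s : ℝ} (hl : l < ξ)
    (hd : HasDerivAt g d ξ) (hs : ∀ y ∈ Set.Ioo l ξ, s ≤ (g y - g ξ) / (y - ξ)) : s ≤ d := by
  have h1 : Tendsto (slope g ξ) (𝓝[<] ξ) (𝓝 d) := by
    have h2 := (hd.hasDerivWithinAt (s := Set.Iio ξ))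
    rw [hasDerivWithinAt_iff_tendsto_slope] at h2
    simpa [Set.diff_singleton_eq_self (show ξ ∉ Set.Iio ξ by simp)] using h2
  refine ge_of_tendsto h1 ?_
  filter_upwards [Ioo_mem_nhdsLT_of_mem ⟨hl, le_refl ξ⟩] with y hy
  simpa [slope_def_field] using hs y hy

lemma aux_deriv_le_left {g : ℝ → ℝ} {ξ l d s : ℝ} (hl : l < ξ)
    (hd : HasDerivAt g d ξ) (hs : ∀ y ∈ Set.Ioo l ξ, (g y - g ξ) / (y - ξ) ≤ s) : d ≤ s := by
  have := aux_deriv_ge_left (g := fun x => -g x) (d := -d) (s := -s) hl hd.neg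
    (fun y hy => by
      have := hs y hy
      have e : (-g y - -g ξ) / (y - ξ) = -((g y - g ξ) / (y - ξ)) := by ring
      rw [e]; linarith)
  linarith

lemma aux_exists_mem_of_ae {μ : Measure ℝ} {P : ℝ → Prop} (h : ∀ᵐ x ∂μ, P x)
    {I : Set ℝ} (hI : μ I ≠ 0) : ∃ x ∈ I, P x := by
  by_contra hc
  push_neg at hc
  exact hI (measure_mono_null (fun x hx => by simpa using hc x hx) (ae_iff.mp h))

lemma aux_restrict_Ioo_ne_zero {a b p q : ℝ} (hpq : p < q) (hsub : Set.Ioo p q ⊆ Set.Icc a b) :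
    (volume.restrict (Set.Icc a b)) (Set.Ioo p q) ≠ 0 := by
  rw [Measure.restrict_apply' measurableSet_Icc, Set.inter_eq_left.mpr hsub, Real.volume_Ioo]
  simp only [ne_eq, ENNReal.ofReal_eq_zero, not_le]
  linarith

lemma aux_Ioo_ne_zero {p q : ℝ} (hpq : p < q) : (volume : Measure ℝ) (Set.Ioo p q) ≠ 0 := by
  rw [Real.volume_Ioo]
  simp only [ne_eq, ENNReal.ofReal_eq_zero, not_le]
  linarith
/-- Characterization of the assumption `η'·f' ≤ 0` a.e. on `K = [a,b]` for a
concave bell-shaped flux `f` and a convex entropy `η`: it holds iff there is a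
point `ρ* ∈ K` which is simultaneously a minimum point of `η` on `K` and a
maximum point of `f` on `K`. -/
theorem entropy_flux_sign_characterization (a b : ℝ) (hab : a < b)
    (f f' η η' : ℝ → ℝ) (L : NNReal)
    (hfl : LipschitzOnWith L f (Set.Icc a b))
    (hfconc : ConcaveOn ℝ (Set.Icc a b) f)
    (hfa : f a = 0) (hfb : f b = 0) (hfnn : ∀ x ∈ Set.Icc a b, 0 ≤ f x)
    (hfne : ∃ x ∈ Set.Icc a b, f x ≠ 0)
    (hfd : ∀ᵐ ξ ∂(volume.restrict (Set.Icc a b)), HasDerivAt f (f' ξ) ξ)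
    (hconv : ConvexOn ℝ Set.univ η) (hmono : Monotone η')
    (hηd : ∀ᵐ ξ ∂(volume : Measure ℝ), HasDerivAt η (η' ξ) ξ) :
    (∀ᵐ ξ ∂(volume.restrict (Set.Icc a b)), η' ξ * f' ξ ≤ 0) ↔
    ∃ ρ ∈ Set.Icc a b,
      (∀ y ∈ Set.Icc a b, η ρ ≤ η y) ∧ (∀ y ∈ Set.Icc a b, f y ≤ f ρ) := by
  have hfc : ContinuousOn f (Set.Icc a b) := hfl.continuousOn
  have hηc : Continuous η := by
    have h := hconv.continuousOn isOpen_univ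
    exact continuousOn_univ.mp h
  have hηd' : ∀ᵐ ξ ∂(volume.restrict (Set.Icc a b)), HasDerivAt η (η' ξ) ξ :=
    hηd.filter_mono (ae_mono Measure.restrict_le_self)
  have hmem : ∀ᵐ ξ ∂(volume.restrict (Set.Icc a b)), ξ ∈ Set.Icc a b :=
    ae_restrict_mem measurableSet_Icc
  constructor
  · intro hsign
    -- maximizer set of f
    obtain ⟨c, hcK, hc⟩ := isCompact_Icc.exists_isMaxOn (Set.nonempty_Icc.mpr hab.le) hfc
    have hcmax : ∀ y ∈ Set.Icc a b, f y ≤ f c := fun y hy => hc hy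
    obtain ⟨x0, hx0K, hx0⟩ := hfne
    have hfc_pos : 0 < f c :=
      lt_of_lt_of_le (lt_of_le_of_ne (hfnn x0 hx0K) (Ne.symm hx0)) (hcmax x0 hx0K)
    set S := {x | x ∈ Set.Icc a b ∧ f x = f c} with hSdef
    have hSclosed : IsClosed S := by
      have h : S = Set.Icc a b ∩ f ⁻¹' {f c} := by
        ext x; simp [hSdef]
      rw [h]
      exact hfc.preimage_isClosed_of_isClosed isClosed_Icc isClosed_singleton
    have hSne : S.Nonempty := ⟨c, hcK, rfl⟩
    have hSbddB : BddBelow S := ⟨a, fun x hx => hx.1.1⟩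
    have hSbddA : BddAbove S := ⟨b, fun x hx => hx.1.2⟩
    set m1 := sInf S with hm1def
    set m2 := sSup S with hm2def
    have hm1S : m1 ∈ S := hSclosed.csInf_mem hSne hSbddB
    have hm2S : m2 ∈ S := hSclosed.csSup_mem hSne hSbddA
    have hm1K : m1 ∈ Set.Icc a b := hm1S.1
    have hm2K : m2 ∈ Set.Icc a b := hm2S.1
    have ham1 : a < m1 := by
      rcases eq_or_lt_of_le hm1K.1 with h | h
      · exfalso
        have h2 : f m1 = f c := hm1S.2
        rw [← h, hfa] at h2
        exact hfc_pos.ne h2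
      · exact h
    have hm2b : m2 < b := by
      rcases eq_or_lt_of_le hm2K.2 with h | h
      · exfalso
        have h2 : f m2 = f c := hm2S.2
        rw [h, hfb] at h2
        exact hfc_pos.ne h2
      · exact h
    have hm12 : m1 ≤ m2 := by
      have h1 : m1 ≤ c := csInf_le hSbddB ⟨hcK, rfl⟩
      have h2 : c ≤ m2 := le_csSup hSbddA ⟨hcK, rfl⟩
      linarith
    have hgood := hsign.and (hfd.and (hηd'.and hmem))
    -- η' ≤ 0 to the left of m1
    have hηneg : ∀ ξ, ξ < m1 → η' ξ ≤ 0 := by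
      intro ξ hξ
      have hpm1 : max ξ a < m1 := max_lt hξ ham1
      have hsub : Set.Ioo (max ξ a) m1 ⊆ Set.Icc a b :=
        fun z hz => ⟨le_trans (le_max_right ξ a) hz.1.le, le_trans hz.2.le hm1K.2⟩
      obtain ⟨z, hzI, hzsign, hzfd, hzηd, hzK⟩ :=
        aux_exists_mem_of_ae hgood (aux_restrict_Ioo_ne_zero hpm1 hsub)
      have hzm1 : z < m1 := hzI.2
      have hfz_lt : f z < f c := by
        refine lt_of_le_of_ne (hcmax z hzK) (fun h => ?_)
        exact absurd (csInf_le hSbddB ⟨hzK, h⟩) (not_le.mpr hzm1)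
      -- slopes from z up to m1 are at least the secant slope, which is positive
      have hsl : ∀ y ∈ Set.Ioo z m1, (f m1 - f z) / (m1 - z) ≤ (f y - f z) / (y - z) := by
        intro y hy
        have hyK : y ∈ Set.Icc a b := ⟨le_trans hzK.1 hy.1.le, le_trans hy.2.le hm1K.2⟩
        have h := hfconc.neg.secant_mono hzK hyK hm1K (ne_of_gt hy.1) (ne_of_gt hzm1) hy.2.le
        simp only [Pi.neg_apply] at h
        have e1 : (-f y - -f z) / (y - z) = -((f y - f z) / (y - z)) := by ring
        have e2 : (-f m1 - -f z) / (m1 - z) = -((f m1 - f z) / (m1 - z)) := by ring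
        rw [e1, e2, neg_le_neg_iff] at h
        exact h
      have hfz : (f m1 - f z) / (m1 - z) ≤ f' z := aux_deriv_ge_right hzm1 hzfd hsl
      have hspos : 0 < (f m1 - f z) / (m1 - z) := by
        apply div_pos
        · rw [hm1S.2]; linarith
        · linarith
      have hf'pos : 0 < f' z := lt_of_lt_of_le hspos hfz
      have hηz : η' z ≤ 0 :=
        le_of_not_gt fun h => (mul_pos h hf'pos).not_ge hzsign
      exact le_trans (hmono (le_of_lt (lt_of_le_of_lt (le_max_left ξ a) hzI.1))) hηz
    -- η' ≥ 0 to the right of m2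
    have hηpos : ∀ ξ, m2 < ξ → 0 ≤ η' ξ := by
      intro ξ hξ
      have hpm2 : m2 < min ξ b := lt_min hξ hm2b
      have hsub : Set.Ioo m2 (min ξ b) ⊆ Set.Icc a b :=
        fun z hz => ⟨le_trans hm2K.1 hz.1.le, le_trans hz.2.le (min_le_right ξ b)⟩
      obtain ⟨z, hzI, hzsign, hzfd, hzηd, hzK⟩ :=
        aux_exists_mem_of_ae hgood (aux_restrict_Ioo_ne_zero hpm2 hsub)
      have hzm2 : m2 < z := hzI.1
      have hfz_lt : f z < f c := by
        refine lt_of_le_of_ne (hcmax z hzK) (fun h => ?_)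
        exact absurd (le_csSup hSbddA ⟨hzK, h⟩) (not_le.mpr hzm2)
      have hsl : ∀ y ∈ Set.Ioo m2 z, (f y - f z) / (y - z) ≤ (f m2 - f z) / (m2 - z) := by
        intro y hy
        have hyK : y ∈ Set.Icc a b := ⟨le_trans hm2K.1 hy.1.le, le_trans hy.2.le hzK.2⟩
        have h := hfconc.neg.secant_mono hzK hm2K hyK (ne_of_lt hzm2) (ne_of_lt hy.2) hy.1.le
        simp only [Pi.neg_apply] at h
        have e1 : (-f y - -f z) / (y - z) = -((f y - f z) / (y - z)) := by ring
        have e2 : (-f m2 - -f z) / (m2 - z) = -((f m2 - f z) / (m2 - z)) := by ring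
        rw [e1, e2, neg_le_neg_iff] at h
        exact h
      have hfz : f' z ≤ (f m2 - f z) / (m2 - z) := aux_deriv_le_left hzm2 hzfd hsl
      have hsneg : (f m2 - f z) / (m2 - z) < 0 := by
        apply div_neg_of_pos_of_neg
        · rw [hm2S.2]; linarith
        · linarith
      have hf'neg : f' z < 0 := lt_of_le_of_lt hfz hsneg
      have hηz : 0 ≤ η' z :=
        le_of_not_gt fun h => (mul_pos_of_neg_of_neg h hf'neg).not_ge hzsign
      exact le_trans hηz (hmono (le_of_lt (lt_of_lt_of_le hzI.2 (min_le_left ξ b))))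
    -- η m1 ≤ η y for y < m1
    have hη_left : ∀ y, y < m1 → η m1 ≤ η y := by
      intro y hy
      refine le_of_forall_pos_le_add fun ε hε => ?_
      obtain ⟨δ, hδ, hδε⟩ := Metric.continuousAt_iff.mp (hηc.continuousAt (x := m1)) ε hε
      have hpm1 : max y (m1 - δ) < m1 := max_lt hy (by linarith)
      obtain ⟨z, hzI, hzηd⟩ := aux_exists_mem_of_ae hηd (aux_Ioo_ne_zero hpm1)
      have hyz : y < z := lt_of_le_of_lt (le_max_left y (m1 - δ)) hzI.1
      -- slope from y to z is ≤ η' z ≤ 0, hence η z ≤ η y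
      have hsl : ∀ w ∈ Set.Ioo y z, (η y - η z) / (y - z) ≤ (η w - η z) / (w - z) := by
        intro w hw
        exact hconv.secant_mono (Set.mem_univ z) (Set.mem_univ y) (Set.mem_univ w)
          (ne_of_lt hyz) (ne_of_lt hw.2) hw.1.le
      have h1 : (η y - η z) / (y - z) ≤ η' z := aux_deriv_ge_left hyz hzηd hsl
      have h2 : η' z ≤ 0 := hηneg z hzI.2
      have hzy : η z ≤ η y := by
        have h3 : (η y - η z) / (y - z) ≤ 0 := le_trans h1 h2
        rcases le_or_gt (η z) (η y) with h | h
        · exact h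
        · exfalso
          have : 0 < (η y - η z) / (y - z) := div_pos_of_neg_of_neg (by linarith) (by linarith)
          linarith
      have hdist : dist z m1 < δ := by
        rw [Real.dist_eq, abs_of_nonpos (by linarith [hzI.2])]
        have := lt_of_le_of_lt (le_max_right y (m1 - δ)) hzI.1
        linarith
      have := hδε hdist
      rw [Real.dist_eq, abs_lt] at this
      linarith
    -- η m2 ≤ η y for y > m2
    have hη_right : ∀ y, m2 < y → η m2 ≤ η y := by
      intro y hy
      refine le_of_forall_pos_le_add fun ε hε => ?_
      obtain ⟨δ, hδ, hδε⟩ := Metric.continuousAt_iff.mp (hηc.continuousAt (x := m2)) ε hε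
      have hpm2 : m2 < min y (m2 + δ) := lt_min hy (by linarith)
      obtain ⟨z, hzI, hzηd⟩ := aux_exists_mem_of_ae hηd (aux_Ioo_ne_zero hpm2)
      have hzy : z < y := lt_of_lt_of_le hzI.2 (min_le_left y (m2 + δ))
      have hsl : ∀ w ∈ Set.Ioo z y, (η w - η z) / (w - z) ≤ (η y - η z) / (y - z) := by
        intro w hw
        exact hconv.secant_mono (Set.mem_univ z) (Set.mem_univ w) (Set.mem_univ y)
          (ne_of_gt hw.1) (ne_of_gt hzy) hw.2.le
      have h1 : η' z ≤ (η y - η z) / (y - z) := aux_deriv_le_right hzy hzηd hsl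
      have h2 : 0 ≤ η' z := hηpos z hzI.1
      have hzy' : η z ≤ η y := by
        have h3 : 0 ≤ (η y - η z) / (y - z) := le_trans h2 h1
        rcases le_or_gt (η z) (η y) with h | h
        · exact h
        · exfalso
          have : (η y - η z) / (y - z) < 0 := div_neg_of_neg_of_pos (by linarith) (by linarith)
          linarith
      have hdist : dist z m2 < δ := by
        rw [Real.dist_eq, abs_of_nonneg (by linarith [hzI.1])]
        have := lt_of_lt_of_le hzI.2 (min_le_right y (m2 + δ))
        linarith
      have := hδε hdist
      rw [Real.dist_eq, abs_lt] at this
      linarith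
    -- f is constant equal to f c on [m1, m2]
    have hconst : ∀ x ∈ Set.Icc m1 m2, f x = f c := by
      intro x hx
      have hxK : x ∈ Set.Icc a b := ⟨le_trans hm1K.1 hx.1, le_trans hx.2 hm2K.2⟩
      rcases eq_or_lt_of_le hx.1 with h | h
      · rw [← h]; exact hm1S.2
      · have h1 : f x ≤ f m1 := by rw [hm1S.2]; exact hcmax x hxK
        have h2 : f m2 ≤ f x := hfconc.right_le_of_le_left'' hm1K hm2K h hx.2 h1
        rw [hm2S.2] at h2
        exact le_antisymm (hcmax x hxK) h2
    -- take the minimizer of η on [m1, m2]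
    obtain ⟨ρ, hρI, hρmin⟩ :=
      isCompact_Icc.exists_isMinOn (Set.nonempty_Icc.mpr hm12) hηc.continuousOn
    have hρK : ρ ∈ Set.Icc a b := ⟨le_trans hm1K.1 hρI.1, le_trans hρI.2 hm2K.2⟩
    refine ⟨ρ, hρK, ?_, ?_⟩
    · intro y hyK
      rcases lt_or_ge y m1 with h | h
      · exact le_trans (hρmin (Set.left_mem_Icc.mpr hm12)) (hη_left y h)
      · rcases le_or_gt y m2 with h2 | h2
        · exact hρmin ⟨h, h2⟩
        · exact le_trans (hρmin (Set.right_mem_Icc.mpr hm12)) (hη_right y h2)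
    · intro y hyK
      rw [hconst ρ hρI]
      exact hcmax y hyK
  · rintro ⟨ρ, hρK, hηmin, hfmax⟩
    have hne : ∀ᵐ ξ ∂(volume.restrict (Set.Icc a b)), ξ ≠ ρ := by
      refine Filter.Eventually.filter_mono (ae_mono Measure.restrict_le_self) ?_
      refine ae_iff.mpr ?_
      have : {ξ : ℝ | ¬ ξ ≠ ρ} = {ρ} := by ext x; simp
      rw [this]
      exact Real.volume_singleton
    filter_upwards [hfd, hηd', hmem, hne] with ξ hfξ hηξ hξK hξρ
    rcases lt_or_gt_of_ne hξρ with h | h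
    · -- ξ < ρ : f' ξ ≥ 0 and η' ξ ≤ 0
      have hf' : 0 ≤ f' ξ := by
        refine aux_deriv_ge_right h hfξ fun y hy => ?_
        have hyK : y ∈ Set.Icc a b := ⟨le_trans hξK.1 hy.1.le, le_trans hy.2.le hρK.2⟩
        have hle : f ξ ≤ f y :=
          hfconc.left_le_of_le_right'' hξK hρK hy.1.le hy.2 (hfmax y hyK)
        exact div_nonneg (by linarith) (by linarith [hy.1])
      have hη' : η' ξ ≤ 0 := by
        refine aux_deriv_le_right h hηξ fun y hy => ?_
        have hyK : y ∈ Set.Icc a b := ⟨le_trans hξK.1 hy.1.le, le_trans hy.2.le hρK.2⟩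
        have hle : η y ≤ η ξ :=
          hconv.le_left_of_right_le'' (Set.mem_univ ξ) (Set.mem_univ ρ) hy.1.le hy.2
            (hηmin y hyK)
        exact div_nonpos_of_nonpos_of_nonneg (by linarith) (by linarith [hy.1])
      exact mul_nonpos_of_nonpos_of_nonneg hη' hf'
    · -- ρ < ξ : f' ξ ≤ 0 and η' ξ ≥ 0
      have hf' : f' ξ ≤ 0 := by
        refine aux_deriv_le_left h hfξ fun y hy => ?_
        have hyK : y ∈ Set.Icc a b := ⟨le_trans hρK.1 hy.1.le, le_trans hy.2.le hξK.2⟩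
        have hle : f ξ ≤ f y :=
          hfconc.right_le_of_le_left'' hρK hξK hy.1 hy.2.le (hfmax y hyK)
        exact div_nonpos_of_nonneg_of_nonpos (by linarith) (by linarith [hy.2])
      have hη' : 0 ≤ η' ξ := by
        refine aux_deriv_ge_left h hηξ fun y hy => ?_
        have hyK : y ∈ Set.Icc a b := ⟨le_trans hρK.1 hy.1.le, le_trans hy.2.le hξK.2⟩
        have hle : η y ≤ η ξ :=
          hconv.le_right_of_left_le'' (Set.mem_univ ρ) (Set.mem_univ ξ) hy.1 hy.2.le
            (hηmin y hyK)
        exact div_nonneg_iff.mpr (Or.inr ⟨by linarith, by linarith [hy.2]⟩)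
      exact mul_nonpos_of_nonneg_of_nonpos hη' hf'
end

section
/- Let f:[a,b]→ℝ be concave, and let u,v∈[a,b] with u ≤ v and f(u)=f(v). Then for every ρ∈[a,b]: sgn(ρ−v)·(f(ρ)−f(v)) ≤ sgn(ρ−u)·(f(ρ)−f(u)), with the convention sgn(0)=0. -/
open MeasureTheory

/-- Comparison of Kružkov entropy fluxes with respect to two reference states of
equal flux value, for a concave flux `f` on `[a,b]`. -/
theorem kruzkov_flux_comparison (a b : ℝ) (f : ℝ → ℝ)
    (hconc : ConcaveOn ℝ (Set.Icc a b) f)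
    (u v : ℝ) (hu : u ∈ Set.Icc a b) (hv : v ∈ Set.Icc a b) (huv : u ≤ v)
    (hfuv : f u = f v) (ρ : ℝ) (hρ : ρ ∈ Set.Icc a b) :
    Real.sign (ρ - v) * (f ρ - f v) ≤ Real.sign (ρ - u) * (f ρ - f u) := by
  rcases lt_trichotomy ρ u with h1 | h1 | h1
  · -- ρ < u ≤ v : both sides equal -(f ρ - f u)
    rw [Real.sign_of_neg (by linarith), Real.sign_of_neg (by linarith), hfuv]
  · -- ρ = u
    subst h1
    rcases eq_or_lt_of_le huv with h2 | h2
    · subst h2; exact le_refl _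
    · rw [sub_self, Real.sign_zero, Real.sign_of_neg (show ρ - v < 0 by linarith), hfuv]
      norm_num
  · rcases lt_trichotomy ρ v with h2 | h2 | h2
    · -- u < ρ < v : need f u + f v ≤ 2 f ρ, i.e. f u ≤ f ρ by concavity
      have hmem : ρ ∈ segment ℝ u v := by
        rw [segment_eq_Icc huv]; exact ⟨le_of_lt h1, le_of_lt h2⟩
      have hmin := hconc.min_le_of_mem_segment hu hv hmem
      rw [← hfuv, min_self] at hmin
      rw [Real.sign_of_neg (by linarith), Real.sign_of_pos (by linarith), ← hfuv]
      nlinarith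
    · -- ρ = v
      subst h2
      rw [sub_self, Real.sign_zero, Real.sign_of_pos (by linarith), hfuv]
      simp
    · -- v < ρ : both sides equal f ρ - f u
      rw [Real.sign_of_pos (by linarith), Real.sign_of_pos (by linarith), hfuv]
end

section
/- Let f:[a,b]→[0,∞) be Lipschitz and concave with f(a)=f(b)=0 and maximum f^max attained at σ∈(a,b). Suppose ρ̂∈[a,b] and a < 0 < b (so 0∈(a,b)). Then ∫_{[σ,b]} f'(ξ)·χ(ρ̂,ξ)dξ + ∫_{[a,σ]} f'(ξ)·sgn₊(ξ)dξ + f(0) = f^max + sgn₊(ρ̂−σ)·(f(ρ̂)−f^max), where sgn₊(x)=1 if x>0 and 0 if x≤0, the sgn₊ in the last term uses the convention sgn₊(0)=0, and χ(ρ̂,ξ)=1 if 0<ξ<ρ̂, −1 if ρ̂<ξ<0, 0 otherwise. -/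
open MeasureTheory

/-- `sgn₊(x) = 1` if `x > 0` and `0` otherwise. -/
noncomputable def sgnp (x : ℝ) : ℝ := if 0 < x then 1 else 0

lemma chi_one {ρ ξ : ℝ} (h1 : 0 < ξ) (h2 : ξ < ρ) : chi ρ ξ = 1 := if_pos ⟨h1, h2⟩

lemma chi_negone {ρ ξ : ℝ} (h1 : ρ < ξ) (h2 : ξ < 0) : chi ρ ξ = -1 := by
  unfold chi
  rw [if_neg (by rintro ⟨u, v⟩; linarith), if_pos ⟨h1, h2⟩]

lemma chi_zero {ρ ξ : ℝ} (h1 : ¬(0 < ξ ∧ ξ < ρ)) (h2 : ¬(ρ < ξ ∧ ξ < 0)) :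
    chi ρ ξ = 0 := by
  unfold chi; rw [if_neg h1, if_neg h2]

open Set in
/-- FTC for a Lipschitz concave function with a.e. derivative `f'`. -/
lemma ftc_concave_aux (a b : ℝ) (f f' : ℝ → ℝ) (L : NNReal)
    (hfL : LipschitzOnWith L f (Set.Icc a b))
    (hconc : ConcaveOn ℝ (Set.Icc a b) f)
    (hfd : ∀ᵐ ξ ∂(volume.restrict (Set.Icc a b)), HasDerivAt f (f' ξ) ξ)
    (c d : ℝ) (hac : a ≤ c) (hcd : c ≤ d) (hdb : d ≤ b) :
    ∫ ξ in Set.Icc c d, f' ξ = f d - f c := by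
  set g : ℝ → ℝ := fun x => derivWithin f (Ioi x) x with hg
  -- right derivative exists everywhere on the interior
  have hright : ∀ x ∈ Ioo a b, HasDerivWithinAt f (g x) (Ioi x) x := by
    intro x hx
    have hxb : x < b := hx.2
    have hne : (Ioo x b).Nonempty := ⟨(x + b) / 2, by constructor <;> linarith⟩
    have hmem : ∀ y ∈ Ioo x b, y ∈ Icc a b := fun y hy =>
      ⟨(hx.1.trans hy.1).le, hy.2.le⟩
    have hanti : AntitoneOn (slope f x) (Ioo x b) := by
      intro u hu v hv huv
      have hneg := hconc.neg
      have h2 := hneg.secant_mono (a := x) (x := u) (y := v)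
        ⟨hx.1.le, hx.2.le⟩ (hmem u hu) (hmem v hv) (ne_of_gt hu.1) (ne_of_gt hv.1) huv
      simp only [Pi.neg_apply] at h2
      have hu0 : (0:ℝ) < u - x := by linarith [hu.1]
      have hv0 : (0:ℝ) < v - x := by linarith [hv.1]
      rw [div_le_div_iff₀ hu0 hv0] at h2
      rw [slope_def_field, slope_def_field, div_le_div_iff₀ hv0 hu0]
      nlinarith [h2]
    have hbdd : BddAbove (slope f x '' Ioo x b) := by
      refine ⟨L, ?_⟩
      rintro _ ⟨y, hy, rfl⟩
      have hd := hfL.dist_le_mul y (hmem y hy) x ⟨hx.1.le, hx.2.le⟩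
      rw [Real.dist_eq, Real.dist_eq] at hd
      have hy0 : (0:ℝ) < y - x := by linarith [hy.1]
      rw [slope_def_field, div_le_iff₀ hy0]
      calc f y - f x ≤ |f y - f x| := le_abs_self _
        _ ≤ L * |y - x| := hd
        _ = L * (y - x) := by rw [abs_of_pos hy0]
    have htend : Filter.Tendsto (slope f x) (nhdsWithin x (Ioi x))
        (nhds (sSup (slope f x '' Ioo x b))) :=
      hanti.tendsto_nhdsWithin_Ioo_right hne hbdd
    have hds : HasDerivWithinAt f (sSup (slope f x '' Ioo x b)) (Ioi x) x :=
      (hasDerivWithinAt_iff_tendsto_slope' (notMem_Ioi.2 le_rfl)).2 htend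
    have heq := hds.derivWithin (uniqueDiffWithinAt_Ioi x)
    rw [hg]; simp only []; rw [heq]; exact hds
  -- bound on g
  have hgbd : ∀ x ∈ Ioo a b, |g x| ≤ L := by
    intro x hx
    have hslope : ∀ᶠ y in nhdsWithin x (Ioi x), |slope f x y| ≤ (L:ℝ) := by
      filter_upwards [Ioo_mem_nhdsGT_of_mem (α := ℝ) ⟨le_rfl, hx.2⟩] with y hy
      have hd := hfL.dist_le_mul y ⟨(hx.1.trans hy.1).le, hy.2.le⟩ x ⟨hx.1.le, hx.2.le⟩
      rw [Real.dist_eq, Real.dist_eq] at hd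
      have hy0 : (0:ℝ) < y - x := by linarith [hy.1]
      rw [slope_def_field, abs_div, abs_of_pos hy0, div_le_iff₀ hy0]
      calc |f y - f x| ≤ L * |y - x| := hd
        _ = L * (y - x) := by rw [abs_of_pos hy0]
    have htend : Filter.Tendsto (slope f x) (nhdsWithin x (Ioi x)) (nhds (g x)) :=
      (hasDerivWithinAt_iff_tendsto_slope' (notMem_Ioi.2 le_rfl)).1 (hright x hx)
    exact le_of_tendsto htend.abs hslope
  rcases eq_or_lt_of_le hcd with rfl | hlt
  · have h0 : volume (Icc c c) = 0 := by simp
    rw [Measure.restrict_eq_zero.2 h0, integral_zero_measure, sub_self]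
  -- the points a, b are a.e. avoided
  have hab_ae : ∀ᵐ x ∂(volume.restrict (Icc c d)), x ∉ ({a, b} : Set ℝ) :=
    ae_restrict_of_ae (((Set.countable_singleton _).insert _).ae_notMem _)
  have hIoo : ∀ᵐ x ∂(volume.restrict (Icc c d)), x ∈ Ioo a b := by
    filter_upwards [hab_ae, ae_restrict_mem measurableSet_Icc] with x hx hx2
    simp only [Set.mem_insert_iff, Set.mem_singleton_iff, not_or] at hx
    exact ⟨lt_of_le_of_ne (hac.trans hx2.1) (Ne.symm hx.1),
      lt_of_le_of_ne (hx2.2.trans hdb) hx.2⟩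
  -- integrability of g
  have hgint : IntegrableOn g (Icc c d) := by
    refine Integrable.mono' (g := fun _ => (L:ℝ)) (integrable_const _)
      ((measurable_derivWithin_Ioi f).aestronglyMeasurable) ?_
    filter_upwards [hIoo] with x hx
    simpa using hgbd x hx
  -- g = f' a.e. on Icc c d
  have hae : ∀ᵐ x ∂(volume.restrict (Icc c d)), f' x = g x := by
    have h1 : ∀ᵐ x ∂(volume.restrict (Icc c d)), HasDerivAt f (f' x) x :=
      ae_restrict_of_ae_restrict_of_subset (Icc_subset_Icc hac hdb) hfd
    filter_upwards [h1] with x hx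
    exact (hx.hasDerivWithinAt.derivWithin (uniqueDiffWithinAt_Ioi x)).symm
  calc ∫ ξ in Icc c d, f' ξ = ∫ ξ in Icc c d, g ξ := integral_congr_ae hae
    _ = ∫ ξ in c..d, g ξ := by
        rw [intervalIntegral.integral_of_le hcd, integral_Icc_eq_integral_Ioc]
    _ = f d - f c := by
        apply intervalIntegral.integral_eq_sub_of_hasDeriv_right_of_le hcd
          (hfL.continuousOn.mono (Icc_subset_Icc hac hdb))
          (fun x hx => hright x ⟨hac.trans_lt hx.1, hx.2.trans_le hdb⟩)
        rw [intervalIntegrable_iff_integrableOn_Icc_of_le hcd]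
        exact hgint

open Set in
/-- Reduce a weighted set integral to a multiple of an integral over a subinterval. -/
lemma weighted_integral_aux (f' w : ℝ → ℝ) (s : Set ℝ) (c d ε : ℝ)
    (hsub : Icc c d ⊆ s)
    (hw : ∀ᵐ ξ ∂(volume.restrict s), w ξ = ε * (Icc c d).indicator 1 ξ) :
    ∫ ξ in s, f' ξ * w ξ = ε * ∫ ξ in Icc c d, f' ξ := by
  have h1 : ∫ ξ in s, f' ξ * w ξ
      = ∫ ξ in s, (Icc c d).indicator (fun ξ => ε * f' ξ) ξ := by
    refine integral_congr_ae ?_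
    filter_upwards [hw] with ξ h
    rw [h]
    by_cases hξ : ξ ∈ Icc c d
    · rw [Set.indicator_of_mem hξ, Set.indicator_of_mem hξ]
      simp only [Pi.one_apply]; ring
    · rw [Set.indicator_of_notMem hξ, Set.indicator_of_notMem hξ]
      ring
  rw [h1, setIntegral_indicator measurableSet_Icc, Set.inter_eq_self_of_subset_right hsub,
    integral_const_mul]

/-- Total kinetic flux through the junction boundary for a concave bell-shaped
flux: with equilibrium outgoing data `χ(ρ̂,·)` on the decreasing branch `[σ,b]`
and maximal incoming data `sgn₊` on the increasing branch `[a,σ]`,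
`∫_{[σ,b]} f'·χ(ρ̂,·) + ∫_{[a,σ]} f'·sgn₊ + f(0) = f^max + sgn₊(ρ̂−σ)(f(ρ̂)−f^max)`. -/
theorem stationary_kinetic_boundary_flux (a b σ : ℝ) (ha : a < 0) (hb : 0 < b)
    (hσ : σ ∈ Set.Ioo a b)
    (f f' : ℝ → ℝ) (L : NNReal) (hfL : LipschitzOnWith L f (Set.Icc a b))
    (hconc : ConcaveOn ℝ (Set.Icc a b) f)
    (hfa : f a = 0) (hfb : f b = 0) (hfnn : ∀ x ∈ Set.Icc a b, 0 ≤ f x)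
    (hmax : ∀ x ∈ Set.Icc a b, f x ≤ f σ)
    (hfd : ∀ᵐ ξ ∂(volume.restrict (Set.Icc a b)), HasDerivAt f (f' ξ) ξ)
    (ρ : ℝ) (hρ : ρ ∈ Set.Icc a b) :
    (∫ ξ in Set.Icc σ b, f' ξ * chi ρ ξ) +
      (∫ ξ in Set.Icc a σ, f' ξ * sgnp ξ) + f 0 =
    f σ + sgnp (ρ - σ) * (f ρ - f σ) := by
  obtain ⟨hσa, hσb⟩ := hσ
  obtain ⟨hρa, hρb⟩ := hρ
  have key : ∀ c d : ℝ, a ≤ c → c ≤ d → d ≤ b →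
      ∫ ξ in Set.Icc c d, f' ξ = f d - f c :=
    fun c d h1 h2 h3 => ftc_concave_aux a b f f' L hfL hconc hfd c d h1 h2 h3
  have havoid : ∀ s : Set ℝ, ∀ᵐ ξ ∂(volume.restrict s),
      ξ ∉ ({σ, 0, ρ} : Set ℝ) := fun s =>
    ae_restrict_of_ae ((((Set.countable_singleton _).insert _).insert _).ae_notMem _)
  have hmemI1 : ∀ᵐ ξ ∂(volume.restrict (Set.Icc σ b)), ξ ∈ Set.Icc σ b :=
    ae_restrict_mem measurableSet_Icc
  have hmemI2 : ∀ᵐ ξ ∂(volume.restrict (Set.Icc a σ)), ξ ∈ Set.Icc a σ :=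
    ae_restrict_mem measurableSet_Icc
  rcases le_or_gt σ 0 with hσ0 | hσ0
  · -- σ ≤ 0 : second integral vanishes
    have hI2 : (∫ ξ in Set.Icc a σ, f' ξ * sgnp ξ)
        = 0 * ∫ ξ in Set.Icc σ σ, f' ξ := by
      apply weighted_integral_aux f' sgnp (Set.Icc a σ) σ σ 0
        (Set.Icc_subset_Icc hσa.le le_rfl)
      filter_upwards [hmemI2] with ξ hξ
      rw [zero_mul]
      exact if_neg (by push_neg; exact hξ.2.trans hσ0)
    rcases le_or_gt ρ σ with hρσ | hσρ
    · -- ρ ≤ σ ≤ 0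
      have hI1 : (∫ ξ in Set.Icc σ b, f' ξ * chi ρ ξ)
          = (-1) * ∫ ξ in Set.Icc σ 0, f' ξ := by
        apply weighted_integral_aux f' (chi ρ) (Set.Icc σ b) σ 0 (-1)
          (Set.Icc_subset_Icc le_rfl hb.le)
        filter_upwards [havoid _, hmemI1] with ξ hne hξ
        simp only [Set.mem_insert_iff, Set.mem_singleton_iff] at hne
        push_neg at hne
        obtain ⟨h₁, h₂, h₃⟩ := hne
        rcases lt_or_gt_of_ne h₂ with hlt | hgt
        · rw [chi_negone (by linarith [hξ.1, lt_of_le_of_ne hξ.1 (Ne.symm h₁)]) hlt,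
            Set.indicator_of_mem (Set.mem_Icc.mpr ⟨hξ.1, hlt.le⟩)]
          simp
        · rw [chi_zero (by rintro ⟨u, v⟩; linarith) (by rintro ⟨u, v⟩; linarith),
            Set.indicator_of_notMem (by rintro ⟨u, v⟩; linarith)]
          ring
      rw [hI1, hI2, key σ 0 hσa.le hσ0 hb.le]
      have hs : sgnp (ρ - σ) = 0 := if_neg (by linarith)
      rw [hs]; ring
    · rcases le_or_gt ρ 0 with hρ0 | hρ0
      · -- σ < ρ ≤ 0
        have hI1 : (∫ ξ in Set.Icc σ b, f' ξ * chi ρ ξ)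
            = (-1) * ∫ ξ in Set.Icc ρ 0, f' ξ := by
          apply weighted_integral_aux f' (chi ρ) (Set.Icc σ b) ρ 0 (-1)
            (Set.Icc_subset_Icc hσρ.le hb.le)
          filter_upwards [havoid _, hmemI1] with ξ hne hξ
          simp only [Set.mem_insert_iff, Set.mem_singleton_iff] at hne
          push_neg at hne
          obtain ⟨h₁, h₂, h₃⟩ := hne
          rcases lt_or_gt_of_ne h₂ with hlt | hgt
          · rcases lt_or_gt_of_ne h₃ with hlt2 | hgt2
            · rw [chi_zero (by rintro ⟨u, v⟩; linarith) (by rintro ⟨u, v⟩; linarith),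
                Set.indicator_of_notMem (by rintro ⟨u, v⟩; linarith)]
              ring
            · rw [chi_negone hgt2 hlt, Set.indicator_of_mem (Set.mem_Icc.mpr ⟨hgt2.le, hlt.le⟩)]
              simp
          · rw [chi_zero (by rintro ⟨u, v⟩; linarith) (by rintro ⟨u, v⟩; linarith),
              Set.indicator_of_notMem (by rintro ⟨u, v⟩; linarith)]
            ring
        rw [hI1, hI2, key ρ 0 hρa hρ0 hb.le]
        have hs : sgnp (ρ - σ) = 1 := if_pos (by linarith)
        rw [hs]; ring
      · -- σ ≤ 0 < ρ
        have hI1 : (∫ ξ in Set.Icc σ b, f' ξ * chi ρ ξ)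
            = 1 * ∫ ξ in Set.Icc 0 ρ, f' ξ := by
          apply weighted_integral_aux f' (chi ρ) (Set.Icc σ b) 0 ρ 1
            (Set.Icc_subset_Icc hσ0 hρb)
          filter_upwards [havoid _, hmemI1] with ξ hne hξ
          simp only [Set.mem_insert_iff, Set.mem_singleton_iff] at hne
          push_neg at hne
          obtain ⟨h₁, h₂, h₃⟩ := hne
          rcases lt_or_gt_of_ne h₂ with hlt | hgt
          · rw [chi_zero (by rintro ⟨u, v⟩; linarith) (by rintro ⟨u, v⟩; linarith),
              Set.indicator_of_notMem (by rintro ⟨u, v⟩; linarith)]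
            ring
          · rcases lt_or_gt_of_ne h₃ with hlt2 | hgt2
            · rw [chi_one hgt hlt2, Set.indicator_of_mem (Set.mem_Icc.mpr ⟨hgt.le, hlt2.le⟩)]
              simp
            · rw [chi_zero (by rintro ⟨u, v⟩; linarith) (by rintro ⟨u, v⟩; linarith),
                Set.indicator_of_notMem (by rintro ⟨u, v⟩; linarith)]
              ring
        rw [hI1, hI2, key 0 ρ ha.le hρ0.le hρb]
        have hs : sgnp (ρ - σ) = 1 := if_pos (by linarith)
        rw [hs]; ring
  · -- 0 < σ
    have hI2 : (∫ ξ in Set.Icc a σ, f' ξ * sgnp ξ)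
        = 1 * ∫ ξ in Set.Icc 0 σ, f' ξ := by
      apply weighted_integral_aux f' sgnp (Set.Icc a σ) 0 σ 1
        (Set.Icc_subset_Icc ha.le le_rfl)
      filter_upwards [havoid _, hmemI2] with ξ hne hξ
      simp only [Set.mem_insert_iff, Set.mem_singleton_iff] at hne
      push_neg at hne
      obtain ⟨h₁, h₂, h₃⟩ := hne
      rcases lt_or_gt_of_ne h₂ with hlt | hgt
      · rw [show sgnp ξ = 0 from if_neg (by linarith),
          Set.indicator_of_notMem (by rintro ⟨u, v⟩; linarith)]
        ring
      · rw [show sgnp ξ = 1 from if_pos hgt, Set.indicator_of_mem (Set.mem_Icc.mpr ⟨hgt.le, hξ.2⟩)]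
        simp
    rcases le_or_gt ρ σ with hρσ | hσρ
    · -- ρ ≤ σ, 0 < σ : first integral vanishes
      have hI1 : (∫ ξ in Set.Icc σ b, f' ξ * chi ρ ξ)
          = 0 * ∫ ξ in Set.Icc σ σ, f' ξ := by
        apply weighted_integral_aux f' (chi ρ) (Set.Icc σ b) σ σ 0
          (Set.Icc_subset_Icc le_rfl hσb.le)
        filter_upwards [hmemI1] with ξ hξ
        rw [zero_mul]
        exact chi_zero (by rintro ⟨u, v⟩; linarith [hξ.1])
          (by rintro ⟨u, v⟩; linarith [hξ.1])
      rw [hI1, hI2, key 0 σ ha.le hσ0.le hσb.le]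
      have hs : sgnp (ρ - σ) = 0 := if_neg (by linarith)
      rw [hs]; ring
    · -- 0 < σ < ρ
      have hI1 : (∫ ξ in Set.Icc σ b, f' ξ * chi ρ ξ)
          = 1 * ∫ ξ in Set.Icc σ ρ, f' ξ := by
        apply weighted_integral_aux f' (chi ρ) (Set.Icc σ b) σ ρ 1
          (Set.Icc_subset_Icc le_rfl hρb)
        filter_upwards [havoid _, hmemI1] with ξ hne hξ
        simp only [Set.mem_insert_iff, Set.mem_singleton_iff] at hne
        push_neg at hne
        obtain ⟨h₁, h₂, h₃⟩ := hne
        have hξ0 : 0 < ξ := lt_of_lt_of_le hσ0 hξ.1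
        rcases lt_or_gt_of_ne h₃ with hlt | hgt
        · rw [chi_one hξ0 hlt, Set.indicator_of_mem (Set.mem_Icc.mpr ⟨hξ.1, hlt.le⟩)]
          simp
        · rw [chi_zero (by rintro ⟨u, v⟩; linarith) (by rintro ⟨u, v⟩; linarith),
            Set.indicator_of_notMem (by rintro ⟨u, v⟩; linarith)]
          ring
      rw [hI1, hI2, key σ ρ hσa.le hσρ.le hρb, key 0 σ ha.le hσ0.le hσb.le]
      have hs : sgnp (ρ - σ) = 1 := if_pos (by linarith)
      rw [hs]; ring
end
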